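/- For every positive integer n, S_9(n) = (24n^3−60n^2+54n−17)·n^2·C(2n,n). -/

import Mathlib

/-!
Folding the sum at its centre `k = n` (the summand is symmetric and vanishes there) leaves
`2 ∑_{k<n} C(2n,k) (n-k)^9`. Since `(k+1) C(2n,k+1) = (2n-k) C(2n,k)`, this half-sum telescopes
against `G(n-k) C(2n,k)` for a polynomial Gosper certificate `G`, and the boundary terms give
`G(0) C(2n,n) - G(n) = (24n^3-60n^2+54n-17) n^2 C(2n,n)`.
-/

open Finset

theorem Nat.cast_choose_succ_mul {R : Type*} [CommRing R] (m k : ℕ) :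
    (m.choose (k + 1) : R) * (k + 1) = m.choose k * (m - k) := by
  rcases le_or_gt k m with hk | hk
  · rw [← Nat.cast_sub hk]
    exact_mod_cast congrArg (Nat.cast : ℕ → R) (Nat.choose_succ_right_eq m k)
  · simp [Nat.choose_eq_zero_of_lt hk, Nat.choose_eq_zero_of_lt (hk.trans (Nat.lt_succ_self k))]

theorem sum_range_choose_mul_even_eq {R : Type*} [Semiring R] (n : ℕ) (f : ℤ → R)
    (hf : ∀ x, f (-x) = f x) :
    ∑ k ∈ range (2 * n + 1), ((2 * n).choose k : R) * f (n - k) =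
      2 * ∑ k ∈ range n, ((2 * n).choose k : R) * f (n - k) + (2 * n).choose n * f 0 := by
  have hupper : ∑ k ∈ range n, ((2 * n).choose (n + 1 + k) : R) * f (n - (n + 1 + k : ℕ)) =
      ∑ k ∈ range n, ((2 * n).choose k : R) * f (n - k) := by
    rw [← sum_range_reflect (fun k => ((2 * n).choose k : R) * f (n - k)) n]
    refine sum_congr rfl fun k hk => ?_
    have hkn : k < n := mem_range.mp hk
    rw [Nat.choose_symm_of_eq_add (by omega : 2 * n = n + 1 + k + (n - 1 - k)), ← hf]
    congr 2; omega
  rw [show 2 * n + 1 = n + 1 + n by ring, sum_range_add, hupper, sum_range_succ, sub_self,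
    add_right_comm, ← two_mul]

theorem sum_range_choose_mul_eq_of_gosper {R : Type*} [CommRing R] [IsDomain R] [CharZero R]
    (m N : ℕ) (q a : ℕ → R)
    (h : ∀ k < N, q (k + 1) * (m - k) - q k * (k + 1) = (k + 1) * a k) :
    ∑ k ∈ range N, (m.choose k : R) * a k = q N * m.choose N - q 0 := by
  rw [← mul_one (q 0), ← Nat.cast_one, ← Nat.choose_zero_right m,
    ← sum_range_sub (fun k => q k * m.choose k)]
  refine sum_congr rfl fun k hk => mul_left_cancel₀ (Nat.cast_add_one_ne_zero k (R := R)) ?_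
  calc ((k : R) + 1) * (m.choose k * a k)
      = m.choose k * (q (k + 1) * (m - k) - q k * (k + 1)) := by rw [h k (mem_range.mp hk)]; ring
    _ = (k + 1) * (q (k + 1) * m.choose (k + 1) - q k * m.choose k) := by
      linear_combination -q (k + 1) * Nat.cast_choose_succ_mul (R := R) m k

/-- Gosper's algorithm applied to `C(2n, k) (n - k)^9`, written in the variable `j = n - k`. -/
def ninthMomentCert (n j : ℤ) : ℤ :=
  (n - j - 4) * j ^ 8 + (4 * n ^ 2 - 12 * n + 14) * j ^ 6
    + (12 * n ^ 3 - 38 * n ^ 2 + 48 * n - 28) * j ^ 4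
    + (24 * n ^ 4 - 72 * n ^ 3 + 88 * n ^ 2 - 54 * n + 17) * j ^ 2
    + (24 * n ^ 3 - 60 * n ^ 2 + 54 * n - 17) * n ^ 2

theorem ninthMomentCert_recurrence (n j : ℤ) :
    ninthMomentCert n (j - 1) * (n + j) - ninthMomentCert n j * (n - j + 1) =
      (n - j + 1) * (2 * j ^ 9) := by
  unfold ninthMomentCert; ring

theorem ninthMomentCert_self (n : ℤ) : ninthMomentCert n n = 0 := by
  unfold ninthMomentCert; ring

theorem stmt_10 (n : ℕ) :
    ∑ k ∈ Finset.range (2 * n + 1), (Nat.choose (2 * n) k : ℤ) * |(n : ℤ) - k| ^ 9 =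
      (24 * n ^ 3 - 60 * n ^ 2 + 54 * n - 17) * n ^ 2 * Nat.choose (2 * n) n := by
  have hhalf := sum_range_choose_mul_eq_of_gosper (2 * n) n
    (fun k => ninthMomentCert n (n - k)) (fun k => 2 * ((n : ℤ) - k) ^ 9) fun k _ => by
      push_cast
      convert ninthMomentCert_recurrence n (n - k) using 2 <;> ring_nf
  simp only [Nat.cast_zero, sub_self, sub_zero, ninthMomentCert_self, mul_left_comm _ (2 : ℤ),
    ← mul_sum] at hhalf
  have habs : ∑ k ∈ range n, ((2 * n).choose k : ℤ) * |(n : ℤ) - k| ^ 9 =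
      ∑ k ∈ range n, ((2 * n).choose k : ℤ) * ((n : ℤ) - k) ^ 9 :=
    sum_congr rfl fun k hk => by rw [abs_of_nonneg (by linarith [mem_range.mp hk])]
  rw [sum_range_choose_mul_even_eq n (fun x => |x| ^ 9) (by simp), habs, hhalf]
  unfold ninthMomentCert; ring
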